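/- For every n and k, the function One^k_n : {0,1}^n → [n+1] giving the position of the k-th one (or n+1 if there are fewer than k ones) can be computed by a decision tree over assignment queries of depth k; i.e., rk(One^k_n) ≤ k. -/

import Mathlib

/-- Decision trees over assignment queries: each internal node is labeled by a
linear ordering of the set `A` of assignments (represented by an injection
`A ↪ ℕ` giving each assignment its position in the ordering), with one child per
possible answer; leaves are labeled by outputs. -/
inductive DTree (A O : Type) where
  | leaf (o : O)
  | node (τ : A ↪ ℕ) (child : A → DTree A O)

/-- The τ-first element of the set `C` of assignments consistent with the input. -/
noncomputable def firstConsistent {A : Type} [Nonempty A] (τ : A ↪ ℕ) (C : Finset A) : A :=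
  Function.invFun τ ((C.image τ).min.getD 0)

/-- Depth of a decision tree: maximal number of queries on a root-to-leaf path. -/
def DTree.depth {A O : Type} [Fintype A] : DTree A O → ℕ
  | .leaf _ => 0
  | .node _ c => (Finset.univ.sup fun a => (c a).depth) + 1

/-- Evaluation of a decision tree on an input `w`, where `consSet w` is the set of
assignments consistent with `w`: at each node descend along the child labeled by
the first consistent assignment in the node's ordering. -/
noncomputable def DTree.eval {I A O : Type} [Nonempty A] (consSet : I → Finset A) :
    DTree A O → I → O
  | .leaf o, _ => o
  | .node τ c, w => (c (firstConsistent τ (consSet w))).eval consSet w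

/-- One^k_n(w) : the (1-based) position of the k-th one in w ∈ {0,1}^n, or n+1
if w has fewer than k ones. -/
def oneK (k n : ℕ) (w : Fin n → Bool) : ℕ :=
  (((Finset.range n).filter fun p =>
      (Finset.univ.filter fun j : Fin n => (j : ℕ) ≤ p ∧ w j = true).card = k).min.getD n) + 1

/-- Assignments are pairs (i,b) with i ∈ [n], b ∈ {0,1}; (i,b) is consistent
with w iff w_i = b. -/
def consSetB (n : ℕ) (w : Fin n → Bool) : Finset (Fin n × Bool) :=
  Finset.univ.filter fun a => w a.1 = a.2

/-! The tree finds the ones of the input one at a time. Having found the ones before position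
`p`, it queries with the ordering that lists the assignments `(i, 1)` with `p ≤ i` first, by
increasing `i`. The answer is then `(i₀, 1)` for the first one `i₀ ≥ p`; any other answer
certifies that there is no one at or after `p`, and the output is `n + 1`. So each query
advances past exactly one more one, and `k` queries locate the `k`-th. -/

theorem Finset.min_eq_of_isLeast {α : Type*} [LinearOrder α] {s : Finset α} {a : α}
    (h : IsLeast (s : Set α) a) : s.min = a := by
  rw [← Finset.coe_min' ⟨a, Finset.mem_coe.1 h.1⟩]
  exact congrArg _ ((Finset.isLeast_min' s _).unique h)

section FirstConsistent

variable {A : Type} [Nonempty A] (τ : A ↪ ℕ) {C : Finset A}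

theorem firstConsistent_eq_of_forall_le {a : A} (ha : a ∈ C) (hmin : ∀ b ∈ C, τ a ≤ τ b) :
    firstConsistent τ C = a := by
  have hleast : IsLeast (C.image τ : Set ℕ) (τ a) := by
    refine ⟨Finset.mem_coe.2 (Finset.mem_image_of_mem τ ha), ?_⟩
    rintro _ hx
    obtain ⟨b, hb, rfl⟩ := Finset.mem_image.1 hx
    exact hmin b hb
  rw [firstConsistent, Finset.min_eq_of_isLeast hleast]
  exact Function.leftInverse_invFun τ.injective a

theorem firstConsistent_mem (hC : C.Nonempty) : firstConsistent τ C ∈ C := by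
  obtain ⟨a, ha, hmin⟩ := C.exists_min_image τ hC
  rwa [firstConsistent_eq_of_forall_le τ ha hmin]

end FirstConsistent

section Ones

variable {n : ℕ} (w : Fin n → Bool)

def onesBefore (p : ℕ) : ℕ :=
  (Finset.univ.filter fun i : Fin n => (i : ℕ) < p ∧ w i = true).card

def IsFirstOneFrom (p : ℕ) (i : Fin n) : Prop :=
  p ≤ i ∧ w i = true ∧ ∀ j : Fin n, p ≤ j → w j = true → i ≤ j

variable {w}

@[simp]
theorem onesBefore_zero : onesBefore w 0 = 0 := by
  simp [onesBefore]

theorem onesBefore_mono : Monotone (onesBefore w) := fun _ _ hpq =>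
  Finset.card_le_card <| Finset.monotone_filter_right _ fun _ _ h => ⟨h.1.trans_le hpq, h.2⟩

theorem onesBefore_le_of_forall_false {p q : ℕ}
    (h : ∀ i : Fin n, p ≤ i → i < q → w i = false) : onesBefore w q ≤ onesBefore w p :=
  Finset.card_le_card fun i hi => by
    simp only [Finset.mem_filter, Finset.mem_univ, true_and] at hi ⊢
    refine ⟨not_le.1 fun hpi => ?_, hi.2⟩
    simp [h i hpi hi.1] at hi

theorem onesBefore_succ_of_true {i : Fin n} (hi : w i = true) :
    onesBefore w (i + 1) = onesBefore w i + 1 := by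
  have hfilter : (Finset.univ.filter fun j : Fin n => (j : ℕ) < i + 1 ∧ w j = true) =
      insert i (Finset.univ.filter fun j : Fin n => (j : ℕ) < i ∧ w j = true) := by
    ext j
    simp only [Finset.mem_filter, Finset.mem_univ, true_and, Finset.mem_insert, Fin.ext_iff]
    constructor
    · rintro ⟨hj, hwj⟩
      rcases Nat.lt_succ_iff_lt_or_eq.1 hj with hj | hj
      · exact .inr ⟨hj, hwj⟩
      · exact .inl hj
    · rintro (hj | ⟨hj, hwj⟩)
      · exact ⟨by omega, Fin.ext hj ▸ hi⟩
      · exact ⟨by omega, hwj⟩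
  rw [onesBefore, hfilter, Finset.card_insert_of_notMem (by simp)]
  rfl

theorem IsFirstOneFrom.onesBefore_succ {p : ℕ} {i : Fin n} (h : IsFirstOneFrom w p i) :
    onesBefore w (i + 1) = onesBefore w p + 1 := by
  obtain ⟨hpi, hi, hmin⟩ := h
  have hgap : onesBefore w i = onesBefore w p :=
    (onesBefore_le_of_forall_false fun j hpj hji =>
      Bool.eq_false_iff.2 fun hj => absurd (hmin j hpj hj) (by omega)).antisymm
      (onesBefore_mono hpi)
  rw [onesBefore_succ_of_true hi, hgap]

theorem exists_isFirstOneFrom_or_forall_false (p : ℕ) :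
    (∃ i, IsFirstOneFrom w p i) ∨ ∀ i : Fin n, p ≤ i → w i = false := by
  by_cases hex : ∃ i : Fin n, p ≤ i ∧ w i = true
  · obtain ⟨i, hi, hmin⟩ := Finset.exists_min_image
      (Finset.univ.filter fun i : Fin n => p ≤ i ∧ w i = true) (fun i => (i : ℕ))
      (by obtain ⟨i, hi⟩ := hex; exact ⟨i, by simpa using hi⟩)
    simp only [Finset.mem_filter, Finset.mem_univ, true_and] at hi hmin
    exact .inl ⟨i, hi.1, hi.2, fun j hpj hj => hmin j ⟨hpj, hj⟩⟩
  · simp only [not_exists, not_and] at hex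
    exact .inr fun i hpi => by simpa using hex i hpi

theorem oneK_eq_onesBefore (k : ℕ) : oneK k n w =
    ((Finset.range n).filter fun q => onesBefore w (q + 1) = k).min.getD n + 1 := by
  simp only [oneK, onesBefore, Nat.lt_add_one_iff]

theorem oneK_eq_of_onesBefore_eq {k : ℕ} {i : Fin n} (hi : w i = true)
    (hk : onesBefore w (i + 1) = k) : oneK k n w = i + 1 := by
  have hleast :
      IsLeast ↑((Finset.range n).filter fun q => onesBefore w (q + 1) = k) (i : ℕ) := by
    refine ⟨by simpa using hk, fun q hq => not_lt.1 fun hqi => ?_⟩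
    simp only [Finset.mem_coe, Finset.mem_filter] at hq
    have := onesBefore_mono (w := w) (by omega : q + 1 ≤ i)
    rw [onesBefore_succ_of_true hi] at hk
    omega
  rw [oneK_eq_onesBefore, Finset.min_eq_of_isLeast hleast]
  rfl

theorem oneK_eq_of_onesBefore_lt {k : ℕ} (hk : onesBefore w n < k) : oneK k n w = n + 1 := by
  have hempty : ((Finset.range n).filter fun q => onesBefore w (q + 1) = k) = ∅ :=
    Finset.filter_eq_empty_iff.2 fun q hq =>
      (onesBefore_mono (w := w) (Finset.mem_range.1 hq)).trans_lt hk |>.ne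
  rw [oneK_eq_onesBefore, hempty]
  rfl

end Ones

def onesFromOrder (n p : ℕ) : Fin n × Bool ↪ ℕ where
  toFun a := if a.2 = true ∧ p ≤ a.1 then a.1 else n + 2 * a.1 + a.2.toNat
  inj' := by
    rintro ⟨i, b⟩ ⟨j, c⟩ h
    have := i.isLt
    have := j.isLt
    simp only at h
    split_ifs at h <;> cases b <;> cases c <;> simp_all [Fin.ext_iff] <;> omega

theorem onesFromOrder_apply {n p : ℕ} (a : Fin n × Bool) : onesFromOrder n p a =
    if a.2 = true ∧ p ≤ a.1 then (a.1 : ℕ) else n + 2 * a.1 + a.2.toNat :=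
  rfl

theorem onesFromOrder_apply_le {n p : ℕ} {w : Fin n → Bool} {i : Fin n}
    (h : IsFirstOneFrom w p i) :
    ∀ a ∈ consSetB n w, onesFromOrder n p (i, true) ≤ onesFromOrder n p a := by
  rintro ⟨j, b⟩ hj
  simp only [consSetB, Finset.mem_filter, Finset.mem_univ, true_and] at hj
  have := i.isLt
  rw [onesFromOrder_apply, onesFromOrder_apply, if_pos ⟨rfl, h.1⟩]
  split_ifs with hb
  · exact h.2.2 j hb.2 (hj ▸ hb.1)
  · omega

/-- `searchTree n j p` looks for the `j`-th one at or after position `p`; when `j = 0` it has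
just found a one at position `p - 1`, whose 1-based position `p` it outputs. -/
def searchTree (n : ℕ) : ℕ → ℕ → DTree (Fin n × Bool) ℕ
  | 0, p => .leaf p
  | j + 1, p => .node (onesFromOrder n p) fun a =>
      if a.2 = true ∧ p ≤ a.1 then searchTree n j (a.1 + 1) else .leaf (n + 1)

theorem depth_searchTree_le (n : ℕ) : ∀ j p, (searchTree n j p).depth ≤ j
  | 0, _ => le_rfl
  | j + 1, p => by
    refine Nat.succ_le_succ (Finset.sup_le fun a _ => ?_)
    dsimp only
    split_ifs
    · exact depth_searchTree_le n j _
    · exact Nat.zero_le j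

section Eval

variable {n : ℕ} [NeZero n] {w : Fin n → Bool}

theorem eval_searchTree_succ_of_isFirstOneFrom {j p : ℕ} {i : Fin n}
    (h : IsFirstOneFrom w p i) :
    (searchTree n (j + 1) p).eval (consSetB n) w =
      (searchTree n j (i + 1)).eval (consSetB n) w := by
  have hfirst : firstConsistent (onesFromOrder n p) (consSetB n w) = (i, true) :=
    firstConsistent_eq_of_forall_le _ (by simp [consSetB, h.2.1]) (onesFromOrder_apply_le h)
  rw [searchTree, DTree.eval, hfirst, if_pos ⟨rfl, h.1⟩]

theorem eval_searchTree_succ_of_forall_false {j p : ℕ}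
    (h : ∀ i : Fin n, p ≤ i → w i = false) :
    (searchTree n (j + 1) p).eval (consSetB n) w = n + 1 := by
  have hmem := firstConsistent_mem (onesFromOrder n p) (C := consSetB n w)
    ⟨(0, w 0), by simp [consSetB]⟩
  set a := firstConsistent (onesFromOrder n p) (consSetB n w)
  have ha : ¬(a.2 = true ∧ p ≤ a.1) := fun ⟨hb, hp⟩ => by
    simp only [consSetB, Finset.mem_filter, Finset.mem_univ, true_and] at hmem
    simp [h a.1 hp, ← hmem] at hb
  rw [searchTree, DTree.eval, if_neg ha, DTree.eval]

theorem eval_searchTree_succ (j p : ℕ) :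
    (searchTree n (j + 1) p).eval (consSetB n) w = oneK (onesBefore w p + (j + 1)) n w := by
  rcases exists_isFirstOneFrom_or_forall_false (w := w) p with ⟨i, hi⟩ | hnone
  · rw [eval_searchTree_succ_of_isFirstOneFrom hi]
    match j with
    | 0 => exact (oneK_eq_of_onesBefore_eq hi.2.1 hi.onesBefore_succ).symm
    | j + 1 =>
      rw [eval_searchTree_succ j (i + 1), hi.onesBefore_succ, add_right_comm, add_assoc]
  · rw [eval_searchTree_succ_of_forall_false hnone, oneK_eq_of_onesBefore_lt]
    have := onesBefore_le_of_forall_false (q := n) fun i hpi _ => hnone i hpi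
    omega

end Eval

/-- One^k_n can be computed by a decision tree over assignment queries of depth k;
i.e. rk(One^k_n) ≤ k. -/
theorem oneK_rank_upper_bound (k n : ℕ) (hk : 1 ≤ k) [NeZero n] :
    ∃ T : DTree (Fin n × Bool) ℕ,
      T.depth ≤ k ∧ ∀ w : Fin n → Bool, T.eval (consSetB n) w = oneK k n w := by
  obtain ⟨j, rfl⟩ := Nat.exists_eq_add_of_le' hk
  refine ⟨searchTree n (j + 1) 0, depth_searchTree_le n (j + 1) 0, fun w => ?_⟩
  simpa using eval_searchTree_succ (w := w) j 0
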